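/- For fixed α with 0 ≤ α < 1, if θ₁ ∈ (0, π/2) is defined by cos θ₁ = ((N−2) + √(N² − 4N^α + 4N^{2α}/(N + N^α − 1)))/(2(N−1)), then sin θ₁ = √2 · N^{(α−2)/2} + o(N^{(α−2)/2}) as N → ∞, and consequently θ₁ = √2 · N^{(α−2)/2} + o(N^{(α−2)/2}). -/

import Mathlib

open Filter Real Asymptotics

noncomputable def cosTheta1 (α N : ℝ) : ℝ :=
  ((N - 2) + Real.sqrt (N ^ 2 - 4 * N ^ α + 4 * N ^ (2 * α) / (N + N ^ α - 1)))
    / (2 * (N - 1))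

open Topology

/-! With `A = N ^ α` and `s` the square root, `(N - s)(N + s)(N + A - 1) = 4A(N - 1)`, so
`1 - cos θ₁ = 2A / ((N + A - 1)(N + s))`. Since `0 ≤ N - s ≤ 4` and `A = o(N)`, this is
asymptotic to `A / N² = N ^ (α - 2)`. Hence `sin² θ₁ = (1 - cos θ₁)(1 + cos θ₁) ~ 2 N ^ (α - 2)`,
and `θ₁ ~ sin θ₁` because `θ₁ → 0`. -/

theorem Asymptotics.IsEquivalent.sqrt {ι : Type*} {l : Filter ι} {u v : ι → ℝ}
    (h : u ~[l] v) : (fun x => √(u x)) ~[l] fun x => √(v x) := by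
  obtain ⟨φ, hφ, huv⟩ := h.exists_eq_mul
  refine isEquivalent_iff_exists_eq_mul.mpr ⟨fun x => √(φ x), by simpa using hφ.sqrt, ?_⟩
  filter_upwards [huv, hφ.eventually_const_lt zero_lt_one] with x hx hφx
  simp only [hx, Pi.mul_apply, Real.sqrt_mul hφx.le]

noncomputable def radicand (N A : ℝ) : ℝ := N ^ 2 - 4 * A + 4 * A ^ 2 / (N + A - 1)

noncomputable def cosRoot (N A : ℝ) : ℝ := ((N - 2) + √(radicand N A)) / (2 * (N - 1))

lemma cosTheta1_eq_cosRoot (α : ℝ) {N : ℝ} (hN : 0 ≤ N) :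
    cosTheta1 α N = cosRoot N (N ^ α) := by
  have hsq : N ^ (2 * α) = (N ^ α) ^ 2 := by
    rw [← Real.rpow_mul_natCast hN, mul_comm]
    norm_num
  rw [cosTheta1, cosRoot, radicand, hsq]

section Radicand

variable {N A : ℝ}

lemma radicand_mul (hu : N + A - 1 ≠ 0) :
    radicand N A * (N + A - 1) = N ^ 2 * (N - 1) + A * (N - 2) ^ 2 := by
  rw [radicand]
  field_simp
  ring

variable (hN : 1 < N) (hA : 0 ≤ A)
include hN hA

lemma radicand_nonneg : 0 ≤ radicand N A := by
  have hu : 0 < N + A - 1 := by linarith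
  refine nonneg_of_mul_nonneg_left ?_ hu
  rw [radicand_mul hu.ne']
  nlinarith

lemma sq_sub_radicand : N ^ 2 - radicand N A = 4 * A * (N - 1) / (N + A - 1) := by
  have hu : N + A - 1 ≠ 0 := by linarith
  rw [eq_div_iff hu, sub_mul, radicand_mul hu]
  ring

lemma sqrt_radicand_le : √(radicand N A) ≤ N := by
  rw [Real.sqrt_le_left (by linarith)]
  have : 0 ≤ 4 * A * (N - 1) / (N + A - 1) := by apply div_nonneg <;> nlinarith
  linarith [sq_sub_radicand hN hA]

lemma sub_sqrt_radicand_mul_add :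
    (N - √(radicand N A)) * (N + √(radicand N A)) = 4 * A * (N - 1) / (N + A - 1) := by
  rw [← sq_sub_radicand hN hA]
  linear_combination -Real.sq_sqrt (radicand_nonneg hN hA)

-- `A ≤ N + A - 1` bounds the right-hand side of `sub_sqrt_radicand_mul_add` by `4 (N - 1)`.
lemma sub_sqrt_radicand_le : N - √(radicand N A) ≤ 4 := by
  have hs : 0 ≤ √(radicand N A) := Real.sqrt_nonneg _
  have hle : 4 * A * (N - 1) / (N + A - 1) ≤ 4 * (N - 1) := by
    rw [div_le_iff₀ (by linarith)]
    nlinarith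
  nlinarith [sub_sqrt_radicand_mul_add hN hA]

lemma one_sub_cosRoot : 1 - cosRoot N A = 2 * A / ((N + A - 1) * (N + √(radicand N A))) := by
  have hs : 0 ≤ √(radicand N A) := Real.sqrt_nonneg _
  have hu : 0 < N + A - 1 := by linarith
  have hprod := sub_sqrt_radicand_mul_add hN hA
  rw [eq_div_iff hu.ne'] at hprod
  rw [cosRoot, one_sub_div (by linarith), div_eq_div_iff (by linarith) (by positivity)]
  linear_combination hprod

end Radicand

section CosRootAsymptotics

variable {A : ℝ → ℝ}

lemma isEquivalent_sqrt_radicand (hA : ∀ᶠ N in atTop, 0 ≤ A N) :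
    (fun N => √(radicand N (A N))) ~[atTop] id := by
  refine IsBigO.trans_isLittleO (g := fun _ => (1 : ℝ)) ?_ (isLittleO_const_id_atTop 1)
  refine IsBigO.of_bound 4 ?_
  filter_upwards [hA, eventually_gt_atTop 1] with N hAN hN
  rw [Pi.sub_apply, id, norm_one, mul_one, Real.norm_eq_abs, abs_le]
  constructor <;> linarith [sqrt_radicand_le hN hAN, sub_sqrt_radicand_le hN hAN]

lemma isEquivalent_one_sub_cosRoot (hA : ∀ᶠ N in atTop, 0 ≤ A N) (hAo : A =o[atTop] id) :
    (fun N => 1 - cosRoot N (A N)) ~[atTop] fun N => A N / N ^ 2 := by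
  have hu : (fun N => N + A N - 1) ~[atTop] id := by
    refine (IsEquivalent.refl.add_isLittleO (hAo.sub (isLittleO_const_id_atTop (1 : ℝ)))).congr_left
      (.of_forall fun N => ?_)
    simp only [Pi.add_apply, id, add_sub_assoc]
  have hNs : (fun N => N + √(radicand N (A N))) ~[atTop] fun N => 2 * N := by
    refine ((isEquivalent_sqrt_radicand hA).isLittleO.const_mul_right two_ne_zero).congr
      (fun N => ?_) (fun N => rfl)
    simp only [Pi.sub_apply, id]
    ring
  have hquot := (IsEquivalent.refl (u := fun N => 2 * A N)).div (hu.mul hNs)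
  refine (hquot.congr_left ?_).congr_right ?_
  · filter_upwards [hA, eventually_gt_atTop 1] with N hAN hN
    exact (one_sub_cosRoot hN hAN).symm
  · filter_upwards [eventually_ne_atTop 0] with N hN
    simp only [Pi.div_apply, Pi.mul_apply, id]
    field_simp

end CosRootAsymptotics

section Theta

variable {α : ℝ}

lemma rpow_isLittleO_id_atTop (hα : α < 1) : (fun N : ℝ => N ^ α) =o[atTop] id := by
  refine (isLittleO_iff_tendsto' (g := id)
    ((eventually_gt_atTop 0).mono fun N hN h => absurd h hN.ne')).2 ?_
  refine (tendsto_rpow_neg_atTop (sub_pos.2 hα)).congr' ?_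
  filter_upwards [eventually_gt_atTop 0] with N hN
  rw [neg_sub, Real.rpow_sub hN, Real.rpow_one, id]

lemma isEquivalent_one_sub_cosTheta1 (hα : α < 1) :
    (fun N => 1 - cosTheta1 α N) ~[atTop] fun N => N ^ (α - 2) := by
  have hA : ∀ᶠ N : ℝ in atTop, 0 ≤ N ^ α :=
    (eventually_ge_atTop 0).mono fun N hN => Real.rpow_nonneg hN α
  refine ((isEquivalent_one_sub_cosRoot hA (rpow_isLittleO_id_atTop hα)).congr_left ?_).congr_right
    ?_
  · filter_upwards [eventually_ge_atTop 0] with N hN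
    rw [cosTheta1_eq_cosRoot α hN]
  · filter_upwards [eventually_gt_atTop 0] with N hN
    rw [Real.rpow_sub hN, Real.rpow_two]

lemma tendsto_cosTheta1 (hα : α < 1) : Tendsto (cosTheta1 α) atTop (𝓝 1) := by
  have h := (isEquivalent_one_sub_cosTheta1 hα).symm.tendsto_nhds
    (by simpa only [neg_sub] using tendsto_rpow_neg_atTop (by linarith : 0 < 2 - α))
  simpa using (tendsto_const_nhds (x := (1 : ℝ))).sub h

lemma isEquivalent_sin_arccos_cosTheta1 (hα : α < 1) :
    (fun N => sin (arccos (cosTheta1 α N))) ~[atTop] fun N => √2 * N ^ ((α - 2) / 2) := by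
  have hadd : (fun N => 1 + cosTheta1 α N) ~[atTop] fun _ => (2 : ℝ) := by
    refine (isEquivalent_const_iff_tendsto two_ne_zero).2 ?_
    simpa only [one_add_one_eq_two] using (tendsto_cosTheta1 hα).const_add 1
  refine (((isEquivalent_one_sub_cosTheta1 hα).mul hadd).sqrt.congr_left ?_).congr_right ?_
  · filter_upwards with N
    rw [Pi.mul_apply, sin_arccos]
    ring_nf
  · filter_upwards [eventually_gt_atTop 0] with N hN
    rw [Pi.mul_apply, Real.sqrt_mul' _ zero_le_two, Real.sqrt_eq_rpow, ← Real.rpow_mul hN.le,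
      mul_comm]
    ring_nf

lemma tendsto_arccos_cosTheta1 (hα : α < 1) :
    Tendsto (fun N => arccos (cosTheta1 α N)) atTop (𝓝 0) := by
  have h := (continuous_arccos.tendsto 1).comp (tendsto_cosTheta1 hα)
  rwa [arccos_one] at h

lemma isEquivalent_arccos_cosTheta1 (hα : α < 1) :
    (fun N => arccos (cosTheta1 α N)) ~[atTop] fun N => √2 * N ^ ((α - 2) / 2) :=
  (isEquivalent_sin.comp_tendsto (tendsto_arccos_cosTheta1 hα)).symm.trans
    (isEquivalent_sin_arccos_cosTheta1 hα)

end Theta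

theorem sin_theta_one_asymptotics_general (α : ℝ) (h1 : α < 1) :
    ((fun N : ℝ => Real.sin (Real.arccos (cosTheta1 α N)) - Real.sqrt 2 * N ^ ((α - 2) / 2))
        =o[atTop] fun N : ℝ => N ^ ((α - 2) / 2)) ∧
    ((fun N : ℝ => Real.arccos (cosTheta1 α N) - Real.sqrt 2 * N ^ ((α - 2) / 2))
        =o[atTop] fun N : ℝ => N ^ ((α - 2) / 2)) :=
  ⟨(isEquivalent_sin_arccos_cosTheta1 h1).isLittleO.trans_isBigO (isBigO_const_mul_self _ _ _),
    (isEquivalent_arccos_cosTheta1 h1).isLittleO.trans_isBigO (isBigO_const_mul_self _ _ _)⟩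

theorem sin_theta_one_asymptotics (α : ℝ) (h0 : 0 ≤ α) (h1 : α < 1) :
    ((fun N : ℝ => Real.sin (Real.arccos (cosTheta1 α N)) - Real.sqrt 2 * N ^ ((α - 2) / 2))
        =o[atTop] fun N : ℝ => N ^ ((α - 2) / 2)) ∧
    ((fun N : ℝ => Real.arccos (cosTheta1 α N) - Real.sqrt 2 * N ^ ((α - 2) / 2))
        =o[atTop] fun N : ℝ => N ^ ((α - 2) / 2)) :=
  sin_theta_one_asymptotics_general α h1
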